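/- Let x, x* ∈ ℝⁿ and T ⊆ {1,…,n} satisfy ‖x*_{Tᶜ}‖₁ ≤ ‖x_{Tᶜ}‖₁, and set h = x* − x. Then for every set T₀ ⊆ Tᶜ, writing T_{|0} = T ∪ T₀, one has ‖h_{T_{|0}ᶜ}‖₁ ≤ 2‖x_{T_{|0}ᶜ}‖₁ + ‖h_{T₀}‖₁. -/
import Mathlib


open scoped BigOperators

/-- The Euclidean (ℓ₂) norm of a vector. -/
noncomputable def l2 {d : ℕ} (u : Fin d → ℝ) : ℝ := Real.sqrt (∑ i, (u i) ^ 2)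

/-- The ℓ₁ norm of a vector. -/
noncomputable def l1 {d : ℕ} (u : Fin d → ℝ) : ℝ := ∑ i, |u i|

/-- `restr S u` equals `u` on `S` and `0` outside `S`. -/
def restr {n : ℕ} (S : Finset (Fin n)) (u : Fin n → ℝ) : Fin n → ℝ :=
  fun i => if i ∈ S then u i else 0

/-- Restricted Isometry Property of order `q` with radius `δ`. -/
def RIP {m n : ℕ} (Φ : Matrix (Fin m) (Fin n) ℝ) (q : ℕ) (δ : ℝ) : Prop :=
  ∀ u : Fin n → ℝ, (Function.support u).ncard ≤ q →
    (1 - δ) * (l2 u) ^ 2 ≤ (l2 (Φ.mulVec u)) ^ 2 ∧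
    (l2 (Φ.mulVec u)) ^ 2 ≤ (1 + δ) * (l2 u) ^ 2

/-- `xs` solves the innovative Basis Pursuit DeNoise program. -/
def solvesIBPDN {m n : ℕ} (Φ : Matrix (Fin m) (Fin n) ℝ) (y : Fin m → ℝ) (ε : ℝ)
    (T : Finset (Fin n)) (xs : Fin n → ℝ) : Prop :=
  l2 (y - Φ.mulVec xs) ≤ ε ∧
  ∀ u : Fin n → ℝ, l2 (y - Φ.mulVec u) ≤ ε → l1 (restr Tᶜ xs) ≤ l1 (restr Tᶜ u)

/-- `S` is a set of largest-magnitude entries of `r`. -/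
def isLargest {n : ℕ} (r : Fin n → ℝ) (S : Finset (Fin n)) : Prop :=
  ∀ i ∈ S, ∀ j ∉ S, |r j| ≤ |r i|

lemma l1_restr {n : ℕ} (S : Finset (Fin n)) (u : Fin n → ℝ) :
    l1 (restr S u) = ∑ i ∈ S, |u i| := by
  unfold l1 restr
  rw [← Finset.sum_subset (Finset.subset_univ S)]
  · exact Finset.sum_congr rfl (fun i hi => by simp [hi])
  · intro i _ hi; simp [hi]

/-- **Cone constraint for the iBPDN error vector.** -/
theorem ibpdn_cone_constraint
    {n : ℕ} (x xstar : Fin n → ℝ) (T : Finset (Fin n))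
    (hmin : l1 (restr Tᶜ xstar) ≤ l1 (restr Tᶜ x))
    (h : Fin n → ℝ) (hh : h = xstar - x)
    (T₀ : Finset (Fin n)) (hT₀ : T₀ ⊆ Tᶜ) :
    l1 (restr (T ∪ T₀)ᶜ h) ≤ 2 * l1 (restr (T ∪ T₀)ᶜ x) + l1 (restr T₀ h) := by
  have hsplit : (T ∪ T₀)ᶜ = Tᶜ \ T₀ := by
    ext i; simp [Finset.mem_compl, Finset.mem_union, Finset.mem_sdiff, and_comm]
  rw [l1_restr, l1_restr, l1_restr, hsplit]
  rw [l1_restr, l1_restr] at hmin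
  have hdec : ∀ (u : Fin n → ℝ), ∑ i ∈ Tᶜ, |u i| = ∑ i ∈ T₀, |u i| + ∑ i ∈ Tᶜ \ T₀, |u i| := by
    intro u
    rw [add_comm, Finset.sum_sdiff hT₀]
  rw [hdec xstar, hdec x] at hmin
  have h1 : ∑ i ∈ T₀, |x i| - ∑ i ∈ T₀, |h i| ≤ ∑ i ∈ T₀, |xstar i| := by
    rw [← Finset.sum_sub_distrib]
    apply Finset.sum_le_sum
    intro i _
    have : xstar i = x i + h i := by simp [hh]
    rw [this]
    linarith [abs_sub_abs_le_abs_sub (x i) (-(h i)), abs_neg (h i),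
      (by ring_nf : x i - -h i = x i + h i) ▸ abs_sub_abs_le_abs_sub (x i) (-(h i))]
  have h2 : ∑ i ∈ Tᶜ \ T₀, |h i| - ∑ i ∈ Tᶜ \ T₀, |x i| ≤ ∑ i ∈ Tᶜ \ T₀, |xstar i| := by
    rw [← Finset.sum_sub_distrib]
    apply Finset.sum_le_sum
    intro i _
    have : xstar i = x i + h i := by simp [hh]
    rw [this]
    have t := abs_sub_abs_le_abs_sub (h i) (-(x i))
    rw [abs_neg, sub_neg_eq_add, add_comm] at t
    linarith
  linarith
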